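/- Let F be a convex subset of a Hausdorff locally convex topological vector space X with 0 ∈ int(F), and let Ω be a proper subset of X (Ω and its complement nonempty). Define μ_Ω^F(x) := +∞ for x ∉ Ω and μ_Ω^F(x) := −T_{Ωᶜ}^F(x) for x ∈ Ω. Then μ_Ω^F is convex if and only if Ω is convex. -/

import Mathlib

/-!
If `Ω` is convex, then `T = T_{Ωᶜ}^F` is concave on `Ω`: given `z = a x + b y` and a time
`t < a T(x) + b T(y)`, write `t = a (c T(x)) + b (c T(y))` with `c < 1`. Moving from `x` for time
`c T(x)` and from `y` for time `c T(y)` along a common direction `f ∈ F` stays in `Ω`, and so does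
the convex combination `z + t f`; hence `t` is not admissible at `z`. Conversely, `μ` is
finite exactly on `Ω`, so convexity of `μ` forces `Ω`, its effective domain, to be convex.
-/

open Set Filter Topology Pointwise

variable {X : Type*} [AddCommGroup X] [Module ℝ X] [TopologicalSpace X]
  [IsTopologicalAddGroup X] [ContinuousSMul ℝ X] [T2Space X] [LocallyConvexSpace ℝ X]

/-- The set of admissible times in the definition of the minimal time function. -/
def timeSet (F Ω : Set X) (x : X) : Set ℝ := {t : ℝ | 0 < t ∧ ∃ f ∈ F, x + t • f ∈ Ω}

/-- The minimal time function with target Ω and constant dynamics F. -/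
noncomputable def minTime (F Ω : Set X) (x : X) : ℝ := sInf (timeSet F Ω x)

open Classical in
/-- The extended-real-valued function μ_Ω^F: equal to −T_{Ωᶜ}^F on Ω and +∞ outside Ω. -/
noncomputable def muFn (F Ω : Set X) (x : X) : EReal :=
  if x ∈ Ω then (↑(-(minTime F Ωᶜ x)) : EReal) else ⊤

section MinTime

variable {E : Type*} [AddCommGroup E] [Module ℝ E] {F Ω : Set E}

lemma timeSet_bddBelow (x : E) : BddBelow (timeSet F Ω x) :=
  ⟨0, fun _ ht => ht.1.le⟩

lemma minTime_nonneg (x : E) : 0 ≤ minTime F Ω x :=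
  Real.sInf_nonneg fun _ ht => ht.1.le

lemma timeSet_nonempty [TopologicalSpace E] [ContinuousSMul ℝ E] (h0 : (0 : E) ∈ interior F)
    (hΩ : Ω.Nonempty) (x : E) :
    (timeSet F Ω x).Nonempty := by
  obtain ⟨ω, hω⟩ := hΩ
  obtain ⟨t, ht, f, hf, htf⟩ :=
    (absorbent_nhds_zero (𝕜 := ℝ) (mem_interior_iff_mem_nhds.mp h0)).gauge_set_nonempty
      (x := ω - x)
  exact ⟨t, ht, f, hf, by rwa [show t • f = ω - x from htf, add_sub_cancel]⟩

lemma add_smul_mem_of_lt_one {x f : E} {c : ℝ} (hx : x ∈ Ω) (hf : f ∈ F) (hc₀ : 0 ≤ c)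
    (hc₁ : c < 1) : x + (c * minTime F Ωᶜ x) • f ∈ Ω := by
  rcases (mul_nonneg hc₀ (minTime_nonneg x)).eq_or_lt with hzero | hpos
  · rwa [← hzero, zero_smul, add_zero]
  · by_contra hout
    have hlt : c * minTime F Ωᶜ x < minTime F Ωᶜ x :=
      mul_lt_of_lt_one_left (pos_of_mul_pos_right hpos hc₀) hc₁
    exact hlt.not_ge (csInf_le (timeSet_bddBelow x) ⟨hpos, f, hf, hout⟩)

lemma minTime_compl_concave [TopologicalSpace E] [ContinuousSMul ℝ E] (h0 : (0 : E) ∈ interior F)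
    (hΩc : Ωᶜ.Nonempty) (hΩ : Convex ℝ Ω) {x y : E} (hx : x ∈ Ω) (hy : y ∈ Ω) {a b : ℝ}
    (ha : 0 ≤ a) (hb : 0 ≤ b) (hab : a + b = 1) :
    a * minTime F Ωᶜ x + b * minTime F Ωᶜ y ≤ minTime F Ωᶜ (a • x + b • y) := by
  refine le_csInf (timeSet_nonempty h0 hΩc _) fun t ⟨ht, f, hf, hout⟩ => ?_
  by_contra! hlt
  have hD := ht.trans hlt
  obtain ⟨c, hc₀, hc₁, rfl⟩ :
      ∃ c, 0 ≤ c ∧ c < 1 ∧ t = c * (a * minTime F Ωᶜ x + b * minTime F Ωᶜ y) :=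
    ⟨t / _, by positivity, (div_lt_one hD).mpr hlt, (div_mul_cancel₀ t hD.ne').symm⟩
  refine hout ?_
  convert hΩ (add_smul_mem_of_lt_one hx hf hc₀ hc₁) (add_smul_mem_of_lt_one hy hf hc₀ hc₁)
    ha hb hab using 1
  module

end MinTime

section MuFn

variable {E : Type*} [AddCommGroup E] [Module ℝ E] (F : Set E) {Ω : Set E} {x : E}

lemma muFn_of_mem (hx : x ∈ Ω) : muFn F Ω x = (↑(-(minTime F Ωᶜ x)) : EReal) := by
  simp [muFn, hx]

lemma muFn_of_notMem (hx : x ∉ Ω) : muFn F Ω x = ⊤ := by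
  simp [muFn, hx]

lemma muFn_ne_top_iff : muFn F Ω x ≠ ⊤ ↔ x ∈ Ω := by
  by_cases hx : x ∈ Ω <;> simp [muFn, hx]

lemma coe_mul_muFn_ne_bot {b : ℝ} (hb : 0 ≤ b) : (b : EReal) * muFn F Ω x ≠ ⊥ := by
  by_cases hx : x ∈ Ω
  · rw [muFn_of_mem F hx, ← EReal.coe_mul]
    exact EReal.coe_ne_bot _
  · rcases hb.eq_or_lt with rfl | hb
    · simp
    · rw [muFn_of_notMem F hx, EReal.coe_mul_top_of_pos hb]
      exact top_ne_bot

lemma muFn_convex_combination_le [TopologicalSpace E] [ContinuousSMul ℝ E]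
    (h0 : (0 : E) ∈ interior F) (hΩc : Ωᶜ.Nonempty) (hΩ : Convex ℝ Ω) (x y : E) {a b : ℝ}
    (ha : 0 < a) (hb : 0 < b) (hab : a + b = 1) :
    muFn F Ω (a • x + b • y) ≤ (a : EReal) * muFn F Ω x + (b : EReal) * muFn F Ω y := by
  by_cases hx : x ∈ Ω
  · by_cases hy : y ∈ Ω
    · rw [muFn_of_mem F (hΩ hx hy ha.le hb.le hab), muFn_of_mem F hx, muFn_of_mem F hy,
        ← EReal.coe_mul, ← EReal.coe_mul, ← EReal.coe_add, EReal.coe_le_coe_iff]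
      linarith [minTime_compl_concave h0 hΩc hΩ hx hy ha.le hb.le hab]
    · rw [muFn_of_notMem F hy, EReal.coe_mul_top_of_pos hb,
        EReal.add_top_of_ne_bot (coe_mul_muFn_ne_bot F ha.le)]
      exact le_top
  · rw [muFn_of_notMem F hx, EReal.coe_mul_top_of_pos ha,
      EReal.top_add_of_ne_bot (coe_mul_muFn_ne_bot F hb.le)]
    exact le_top

end MuFn

theorem muFn_convex_iff_general (F Ω : Set X) (h0 : (0 : X) ∈ interior F)
    (hΩcne : Ωᶜ.Nonempty) :
    (∀ x y : X, ∀ a b : ℝ, 0 ≤ a → 0 ≤ b → a + b = 1 →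
        muFn F Ω (a • x + b • y) ≤ (a : EReal) * muFn F Ω x + (b : EReal) * muFn F Ω y) ↔
      Convex ℝ Ω := by
  constructor
  · intro hμ x hx y hy a b ha hb hab
    rw [← muFn_ne_top_iff F]
    refine ne_top_of_le_ne_top ?_ (hμ x y a b ha hb hab)
    rw [muFn_of_mem F hx, muFn_of_mem F hy, ← EReal.coe_mul, ← EReal.coe_mul, ← EReal.coe_add]
    exact EReal.coe_ne_top _
  · intro hΩ x y a b ha hb hab
    rcases ha.eq_or_lt with rfl | ha
    · obtain rfl : b = 1 := by linarith
      simp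
    rcases hb.eq_or_lt with rfl | hb
    · obtain rfl : a = 1 := by linarith
      simp
    exact muFn_convex_combination_le F h0 hΩcne hΩ x y ha hb hab

/-- The function μ_Ω^F is convex if and only if the set Ω is convex. -/
theorem muFn_convex_iff (F Ω : Set X) (hconv : Convex ℝ F) (h0 : (0 : X) ∈ interior F)
    (hΩne : Ω.Nonempty) (hΩcne : Ωᶜ.Nonempty) :
    (∀ x y : X, ∀ a b : ℝ, 0 ≤ a → 0 ≤ b → a + b = 1 →
        muFn F Ω (a • x + b • y) ≤ (a : EReal) * muFn F Ω x + (b : EReal) * muFn F Ω y) ↔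
      Convex ℝ Ω :=
  muFn_convex_iff_general F Ω h0 hΩcne
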